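/- arXiv:2604.18840 — 2 statements merged into one kernel-verified Lean document; each statement's English description precedes it below -/
import Mathlib

section
/- Fix α > 0. For every x > 0, the function x ↦ F_X(x; α) is differentiable at x with derivative f_X(x; α) = ∫₀^∞ r^α f_R(r)/(x + r^α)² dr; that is, differentiation under the integral sign in the defining formula of F_X is valid and its derivative is given by the stated integral. -/
/-!
Differentiating `fR r / (1 + y r^(-α))` in `y` gives `-fR r · r^(-α) / (1 + y r^(-α))²`, and
`t / (1 + y t)² ≤ 1 / (4y)` by AM–GM, so for `y > x / 2` the derivative is dominated by
`fR / (2x)`. This is integrable on `(0, ∞)`, as `fR ≤ 16` on `(0, 1]` and `fR r ≤ r^(-3/2)` beyond,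
so differentiation under the integral sign applies; writing `r^(-α) = 1 / r^α` turns the
resulting integrand into that of `fX`.
-/

open MeasureTheory ProbabilityTheory Real Set Filter

/-- The standard normal distribution function. -/
noncomputable def Phi (z : ℝ) : ℝ :=
  ∫ t in Set.Iic z, (Real.sqrt (2 * Real.pi))⁻¹ * Real.exp (-(t ^ 2) / 2)

/-- The transformation `g(z) = (1 - Φ(z))⁻¹ - 1`. -/
noncomputable def g (z : ℝ) : ℝ := (1 - Phi z)⁻¹ - 1

/-- The Lévy(0, 1/2) density. -/
noncomputable def fR (r : ℝ) : ℝ :=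
  if 0 < r then (Real.sqrt (4 * Real.pi * r ^ 3))⁻¹ * Real.exp (-(1 / (4 * r))) else 0

/-- The marginal distribution function of the LRSM process. -/
noncomputable def FX (x α : ℝ) : ℝ :=
  1 - ∫ r in Set.Ioi (0:ℝ), fR r / (1 + x * r ^ (-α))

/-- The marginal density of the LRSM process. -/
noncomputable def fX (x α : ℝ) : ℝ :=
  ∫ r in Set.Ioi (0:ℝ), r ^ α * fR r / (x + r ^ α) ^ 2

lemma fR_nonneg (r : ℝ) : 0 ≤ fR r := by
  unfold fR
  split_ifs <;> positivity

lemma measurable_fR : Measurable fR :=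
  Measurable.ite measurableSet_Ioi (by fun_prop) measurable_const

lemma fR_le_of_le_one {r : ℝ} (hr : r ≤ 1) : fR r ≤ 16 := by
  rcases le_or_gt r 0 with h0 | h0
  · simp [fR, not_lt.2 h0]
  rw [fR, if_pos h0]
  have hexp : exp (-(1 / (4 * r))) ≤ 32 * r ^ 2 := by
    have h := pow_div_factorial_le_exp (x := 1 / (4 * r)) (by positivity) 2
    rw [exp_neg, inv_le_comm₀ (exp_pos _) (by positivity)]
    calc (32 * r ^ 2)⁻¹ = (1 / (4 * r)) ^ 2 / (2 : ℕ).factorial := by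
          rw [Nat.factorial_two]; field_simp; norm_num
      _ ≤ _ := h
  have hsqrt : 2 * r ^ 2 ≤ sqrt (4 * π * r ^ 3) := by
    rw [show 2 * r ^ 2 = sqrt ((2 * r ^ 2) ^ 2) from (sqrt_sq (by positivity)).symm]
    apply sqrt_le_sqrt
    nlinarith [pi_gt_three, pow_le_pow_left₀ h0.le hr 4, pow_pos h0 3, pow_pos h0 4]
  calc (sqrt (4 * π * r ^ 3))⁻¹ * exp (-(1 / (4 * r)))
      ≤ (2 * r ^ 2)⁻¹ * (32 * r ^ 2) := by gcongr
      _ = 16 := by field_simp; norm_num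

lemma fR_le_rpow_of_one_lt {r : ℝ} (hr : 1 < r) : fR r ≤ r ^ (-(3 / 2 : ℝ)) := by
  have h0 : 0 < r := one_pos.trans hr
  have hsqrt : sqrt (r ^ 3) = r ^ (3 / 2 : ℝ) := by
    rw [sqrt_eq_rpow, ← rpow_natCast, ← rpow_mul h0.le]
    norm_num
  rw [fR, if_pos h0, rpow_neg h0.le, ← hsqrt, ← mul_one (sqrt (r ^ 3))⁻¹]
  gcongr
  · nlinarith [pi_gt_three, pow_pos h0 3]
  · exact exp_le_one_iff.2 (neg_nonpos.2 (by positivity))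

lemma integrableOn_fR_Ioi : IntegrableOn fR (Ioi 0) := by
  have hnorm (r : ℝ) : ‖fR r‖ = fR r := Real.norm_of_nonneg (fR_nonneg r)
  have h_Ioc : IntegrableOn fR (Ioc 0 1) := by
    refine Integrable.mono' (integrableOn_const (C := (16 : ℝ)) measure_Ioc_lt_top.ne)
      measurable_fR.aestronglyMeasurable ?_
    filter_upwards [ae_restrict_mem measurableSet_Ioc] with r hr
    exact (hnorm r).trans_le (fR_le_of_le_one hr.2)
  have h_Ioi : IntegrableOn fR (Ioi 1) := by
    refine Integrable.mono' (integrableOn_Ioi_rpow_of_lt (a := -(3 / 2)) (by norm_num) one_pos)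
      measurable_fR.aestronglyMeasurable ?_
    filter_upwards [ae_restrict_mem measurableSet_Ioi] with r hr
    exact (hnorm r).trans_le (fR_le_rpow_of_one_lt hr)
  simpa only [Ioc_union_Ioi_eq_Ioi zero_le_one] using h_Ioc.union h_Ioi

lemma div_one_add_mul_sq_le {y t : ℝ} (hy : 0 < y) (ht : 0 ≤ t) :
    t / (1 + y * t) ^ 2 ≤ 1 / (4 * y) := by
  rw [div_le_div_iff₀ (by positivity) (by positivity)]
  nlinarith [sq_nonneg (1 - y * t)]

theorem hasDerivAt_integral_div_one_add_mul {X : Type*} [MeasurableSpace X] {μ : Measure X}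
    {w t : X → ℝ} (hw : Integrable w μ) (ht : AEMeasurable t μ) (ht0 : ∀ᵐ r ∂μ, 0 ≤ t r)
    {x : ℝ} (hx : 0 < x) :
    HasDerivAt (fun y => ∫ r, w r / (1 + y * t r) ∂μ)
      (-∫ r, w r * t r / (1 + x * t r) ^ 2 ∂μ) x := by
  have hx2 : 0 < x / 2 := half_pos hx
  have h_meas (y : ℝ) : AEStronglyMeasurable (fun r => w r / (1 + y * t r)) μ :=
    (hw.aemeasurable.div (aemeasurable_const.add (aemeasurable_const.mul ht))).aestronglyMeasurable
  have h_int : Integrable (fun r => w r / (1 + x * t r)) μ := by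
    refine hw.norm.mono' (h_meas x) ?_
    filter_upwards [ht0] with r hr
    rw [norm_div, Real.norm_of_nonneg (by positivity : 0 ≤ 1 + x * t r)]
    exact div_le_self (norm_nonneg _) (le_add_of_nonneg_right (by positivity))
  have h_bound : ∀ᵐ r ∂μ, ∀ y ∈ Ioi (x / 2),
      ‖-(w r * t r / (1 + y * t r) ^ 2)‖ ≤ ‖w r‖ / (2 * x) := by
    filter_upwards [ht0] with r hr y (hy : x / 2 < y)
    have hy0 : 0 < y := hx2.trans hy
    have ht_frac : 0 ≤ t r / (1 + y * t r) ^ 2 := by positivity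
    calc ‖-(w r * t r / (1 + y * t r) ^ 2)‖ = ‖w r‖ * (t r / (1 + y * t r) ^ 2) := by
          rw [norm_neg, mul_div_assoc, norm_mul, Real.norm_of_nonneg ht_frac]
      _ ≤ ‖w r‖ * (1 / (4 * y)) := by
          gcongr ‖w r‖ * ?_; exact div_one_add_mul_sq_le hy0 hr
      _ ≤ ‖w r‖ * (1 / (2 * x)) := by gcongr ‖w r‖ * (1 / ?_); linarith
      _ = ‖w r‖ / (2 * x) := mul_one_div _ _
  have h_diff : ∀ᵐ r ∂μ, ∀ y ∈ Ioi (x / 2),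
      HasDerivAt (fun y => w r / (1 + y * t r)) (-(w r * t r / (1 + y * t r) ^ 2)) y := by
    filter_upwards [ht0] with r hr y (hy : x / 2 < y)
    have hpos : 0 < 1 + y * t r := by have := hx2.trans hy; positivity
    exact ((hasDerivAt_const y (w r)).div ((hasDerivAt_mul_const (t r)).const_add 1)
      hpos.ne').congr_deriv (by ring)
  have h_meas' : AEStronglyMeasurable (fun r => -(w r * t r / (1 + x * t r) ^ 2)) μ :=
    ((hw.aemeasurable.mul ht).div
      ((aemeasurable_const.add (aemeasurable_const.mul ht)).pow_const 2)).neg.aestronglyMeasurable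
  have := (hasDerivAt_integral_of_dominated_loc_of_deriv_le (Ioi_mem_nhds (half_lt_self hx))
    (.of_forall h_meas) h_int h_meas' h_bound (hw.norm.div_const _) h_diff).2
  rwa [integral_neg] at this

theorem FX_hasDerivAt_fX_general (α : ℝ) :
    ∀ x : ℝ, 0 < x →
      HasDerivAt (fun y => FX y α)
        (∫ r in Set.Ioi (0:ℝ), r ^ α * fR r / (x + r ^ α) ^ 2) x ∧
      HasDerivAt (fun y => FX y α) (fX x α) x := by
  intro x hx
  have h_deriv := hasDerivAt_integral_div_one_add_mul (t := fun r => r ^ (-α))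
    integrableOn_fR_Ioi (by fun_prop)
    (ae_restrict_of_forall_mem measurableSet_Ioi fun r (hr : 0 < r) => (rpow_pos_of_pos hr _).le) hx
  have h_integrand : ∫ r in Ioi 0, fR r * r ^ (-α) / (1 + x * r ^ (-α)) ^ 2 = fX x α := by
    refine setIntegral_congr_fun measurableSet_Ioi fun r (hr : 0 < r) => ?_
    have := rpow_pos_of_pos hr α
    rw [rpow_neg hr.le]
    field_simp
    ring
  have h_FX : HasDerivAt (fun y => FX y α) (fX x α) x := by
    simpa only [FX, h_integrand, neg_neg] using h_deriv.const_sub 1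
  exact ⟨h_FX, h_FX⟩

/-- For `α > 0` and every `x > 0`, the function `x ↦ F_X(x; α)` is
differentiable at `x` with derivative `f_X(x; α) = ∫₀^∞ r^α fR(r)/(x + r^α)² dr`. -/
theorem FX_hasDerivAt_fX (α : ℝ) (hα : 0 < α) :
    ∀ x : ℝ, 0 < x →
      HasDerivAt (fun y => FX y α)
        (∫ r in Set.Ioi (0:ℝ), r ^ α * fR r / (x + r ^ α) ^ 2) x ∧
      HasDerivAt (fun y => FX y α) (fX x α) x :=
  FX_hasDerivAt_fX_general α
end

section
/- Let Z be a standard normal random variable and let β ∈ (0, 1). Then E[g(Z)^β] = ∫₀^∞ ds/(1 + s^{1/β}) = π β / sin(π β); in particular g(Z)^β is integrable for every β ∈ (0, 1). -/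
open MeasureTheory ProbabilityTheory Real Set Filter

/-! Being the distribution function of `Z`, `Φ` is continuous and strictly increasing from `0`
to `1`, so `g(Z) = Φ(Z) / (1 - Φ(Z))` has tail `P(g(Z) > c) = 1 / (1 + c)`, and the layer-cake
formula gives `E[g(Z)^β] = ∫₀^∞ P(g(Z)^β > s) ds = ∫₀^∞ ds / (1 + s^{1/β})`. Substituting
`s = x^β` and then `x = u / (1 - u)` turns this into `β B(β, 1 - β) = β Γ(β) Γ(1 - β)`, which is
`πβ / sin(πβ)` by the reflection formula. -/

lemma Phi_eq_setIntegral_gaussianPDFReal (z : ℝ) :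
    Phi z = ∫ t in Iic z, gaussianPDFReal 0 1 t := by
  simp [Phi, gaussianPDFReal]

lemma Phi_eq_cdf : Phi = cdf (gaussianReal 0 1) := by
  ext z
  rw [cdf_eq_real, measureReal_def, gaussianReal_apply_eq_integral 0 one_ne_zero,
    ENNReal.toReal_ofReal (setIntegral_nonneg measurableSet_Iic
      fun t _ ↦ gaussianPDFReal_nonneg 0 1 t), Phi_eq_setIntegral_gaussianPDFReal]

lemma gaussianReal_real_Ioi (z : ℝ) : (gaussianReal 0 1).real (Ioi z) = 1 - Phi z := by
  rw [← compl_Iic, probReal_compl_eq_one_sub measurableSet_Iic, Phi_eq_cdf, cdf_eq_real]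

lemma hasDerivAt_Phi (z : ℝ) : HasDerivAt Phi (gaussianPDFReal 0 1 z) z := by
  have hint := integrable_gaussianPDFReal 0 1
  have hPhi : Phi = fun x ↦ Phi 0 + ∫ t in 0..x, gaussianPDFReal 0 1 t := by
    ext x
    rw [Phi_eq_setIntegral_gaussianPDFReal, Phi_eq_setIntegral_gaussianPDFReal,
      ← intervalIntegral.integral_Iic_sub_Iic hint.integrableOn hint.integrableOn]
    ring
  rw [hPhi]
  exact (intervalIntegral.integral_hasDerivAt_right hint.intervalIntegrable
    (measurable_gaussianPDFReal 0 1).stronglyMeasurable.stronglyMeasurableAtFilter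
    (by unfold gaussianPDFReal; fun_prop)).const_add _

lemma strictMono_Phi : StrictMono Phi :=
  strictMono_of_hasDerivAt_pos hasDerivAt_Phi fun z ↦ gaussianPDFReal_pos 0 1 z one_ne_zero

lemma continuous_Phi : Continuous Phi :=
  continuous_iff_continuousAt.2 fun z ↦ (hasDerivAt_Phi z).continuousAt

lemma Phi_mem_Ioo (z : ℝ) : Phi z ∈ Ioo 0 1 := by
  have h := strictMono_Phi (sub_one_lt z)
  have h' := strictMono_Phi (lt_add_one z)
  rw [Phi_eq_cdf] at *
  exact ⟨(cdf_nonneg _ _).trans_lt h, h'.trans_le (cdf_le_one _ _)⟩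

lemma Ioo_subset_range_Phi : Ioo 0 1 ⊆ range Phi := by
  rintro u ⟨hu0, hu1⟩
  obtain ⟨a, ha⟩ := ((Phi_eq_cdf ▸ tendsto_cdf_atBot _).eventually_lt_const hu0).exists
  obtain ⟨b, hb⟩ := ((Phi_eq_cdf ▸ tendsto_cdf_atTop _).eventually_const_lt hu1).exists
  exact intermediate_value_univ a b continuous_Phi ⟨ha.le, hb.le⟩

lemma g_eq (z : ℝ) : g z = Phi z / (1 - Phi z) := by
  have h := (Phi_mem_Ioo z).2
  rw [g]
  field_simp
  ring

lemma g_pos (z : ℝ) : 0 < g z := by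
  obtain ⟨h0, h1⟩ := Phi_mem_Ioo z
  rw [g_eq]
  exact div_pos h0 (sub_pos.2 h1)

lemma continuous_g : Continuous g :=
  ((continuous_const.sub continuous_Phi).inv₀ fun z ↦ (sub_pos.2 (Phi_mem_Ioo z).2).ne').sub
    continuous_const

lemma lt_g_iff {c : ℝ} (hc : 0 < 1 + c) (z : ℝ) : c < g z ↔ c / (1 + c) < Phi z := by
  have h := sub_pos.2 (Phi_mem_Ioo z).2
  rw [g_eq, lt_div_iff₀ h, div_lt_iff₀ hc]
  constructor <;> intro <;> linarith

lemma gaussianReal_setOf_lt_g {c : ℝ} (hc : 0 < c) :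
    gaussianReal 0 1 {z | c < g z} = ENNReal.ofReal (1 + c)⁻¹ := by
  have hc1 : 0 < 1 + c := by linarith
  obtain ⟨z₀, hz₀⟩ := Ioo_subset_range_Phi
    ⟨div_pos hc hc1, (div_lt_one hc1).2 (lt_one_add c)⟩
  have hset : {z | c < g z} = Ioi z₀ := by
    ext z
    exact (lt_g_iff hc1 z).trans (hz₀ ▸ strictMono_Phi.lt_iff_lt)
  rw [hset, ← ofReal_measureReal, gaussianReal_real_Ioi, hz₀]
  congr 1
  field_simp
  ring

lemma lintegral_ofReal_g_rpow {β : ℝ} (hβ : 0 < β) :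
    ∫⁻ z, ENNReal.ofReal (g z ^ β) ∂gaussianReal 0 1 =
      ∫⁻ s in Ioi 0, ENNReal.ofReal (1 + s ^ (1 / β))⁻¹ := by
  rw [lintegral_eq_lintegral_meas_lt _ (ae_of_all _ fun z ↦ rpow_nonneg (g_pos z).le β)
    (continuous_g.rpow_const fun _ ↦ Or.inr hβ.le).measurable.aemeasurable]
  refine setLIntegral_congr_fun measurableSet_Ioi fun s (hs : 0 < s) ↦ ?_
  have hset : {z | s < g z ^ β} = {z | s ^ (1 / β) < g z} := by
    ext z
    exact (one_div β ▸ rpow_inv_lt_iff_of_pos hs.le (g_pos z).le hβ).symm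
  rw [hset, gaussianReal_setOf_lt_g (rpow_pos_of_pos hs _)]

lemma integral_Ioo_rpow_mul_one_sub_rpow {a b : ℝ} (ha : 0 < a) (hb : 0 < b) :
    ∫ x in Ioo 0 1, x ^ (a - 1) * (1 - x) ^ (b - 1) = beta a b := by
  have hB := beta_pos ha hb
  set pdf : ℝ → ℝ := fun x ↦ 1 / beta a b * x ^ (a - 1) * (1 - x) ^ (b - 1) with hpdf
  have hnn : 0 ≤ᵐ[volume.restrict (Ioo 0 1)] pdf :=
    ae_restrict_of_forall_mem measurableSet_Ioo fun x hx ↦ by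
      have := rpow_pos_of_pos hx.1 (a - 1)
      have := rpow_pos_of_pos (sub_pos.2 hx.2) (b - 1)
      positivity
  have h := lintegral_betaPDF_eq_one ha hb
  rw [lintegral_betaPDF] at h
  have hint : IntegrableOn pdf (Ioo 0 1) :=
    ⟨by fun_prop, (hasFiniteIntegral_iff_ofReal hnn).2 (h ▸ ENNReal.one_lt_top)⟩
  rw [← ofReal_integral_eq_lintegral_ofReal hint hnn, ENNReal.ofReal_eq_one, hpdf] at h
  simp_rw [mul_assoc, integral_const_mul] at h
  field_simp at h
  exact h

lemma integral_Ioi_rpow_div_one_add_rpow {a b : ℝ} (ha : 0 < a) (hb : 0 < b) :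
    ∫ x in Ioi 0, x ^ (a - 1) / (1 + x) ^ (a + b) = beta a b := by
  have hderiv : ∀ x ∈ Ioi (0 : ℝ),
      HasDerivWithinAt (fun x ↦ x / (1 + x)) (1 / (1 + x) ^ 2) (Ioi 0) x := fun x hx ↦ by
    have h1x : (1 + x) ≠ 0 := by linarith [mem_Ioi.1 hx]
    exact ((hasDerivAt_id' x).div ((hasDerivAt_id' x).const_add 1) h1x).hasDerivWithinAt
      |>.congr_deriv (by ring)
  have hinj : InjOn (fun x : ℝ ↦ x / (1 + x)) (Ioi 0) := fun x hx y hy hxy ↦ by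
    have h1x : 0 < 1 + x := by linarith [mem_Ioi.1 hx]
    have h1y : 0 < 1 + y := by linarith [mem_Ioi.1 hy]
    rw [div_eq_div_iff h1x.ne' h1y.ne'] at hxy
    linarith
  have himage : (fun x : ℝ ↦ x / (1 + x)) '' Ioi 0 = Ioo 0 1 := by
    refine Subset.antisymm ?_ fun u hu ↦ ⟨u / (1 - u), div_pos hu.1 (sub_pos.2 hu.2), ?_⟩
    · rintro _ ⟨x, hx, rfl⟩
      have h1x : 0 < 1 + x := by linarith [mem_Ioi.1 hx]
      exact ⟨div_pos hx h1x, (div_lt_one h1x).2 (lt_one_add x)⟩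
    · have := sub_pos.2 hu.2
      show u / (1 - u) / (1 + u / (1 - u)) = u
      rw [one_add_div this.ne']
      field_simp
      ring
  rw [← integral_Ioo_rpow_mul_one_sub_rpow ha hb, ← himage,
    integral_image_eq_integral_abs_deriv_smul measurableSet_Ioi hderiv hinj]
  refine setIntegral_congr_fun measurableSet_Ioi fun x (hx : 0 < x) ↦ ?_
  have h1x : 0 < 1 + x := by linarith
  have hsplit : (1 + x) ^ (a + b) = (1 + x) ^ (a - 1) * (1 + x) ^ (b - 1) * (1 + x) ^ 2 := by
    rw [← rpow_add h1x, ← rpow_natCast, ← rpow_add h1x]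
    norm_num
    ring_nf
  have h1sub : 1 - x / (1 + x) = (1 + x)⁻¹ := by field_simp; ring
  rw [hsplit, h1sub, div_rpow hx.le h1x.le, inv_rpow h1x.le, smul_eq_mul,
    abs_of_pos (by positivity)]
  have := rpow_pos_of_pos h1x (a - 1)
  have := rpow_pos_of_pos h1x (b - 1)
  field_simp

lemma integral_Ioi_inv_one_add_rpow_one_div {β : ℝ} (hβ0 : 0 < β) (hβ1 : β < 1) :
    ∫ s in Ioi 0, (1 + s ^ (1 / β))⁻¹ = π * β / sin (π * β) := by
  have hcongr : ∀ x ∈ Ioi (0 : ℝ), (|β| * x ^ (β - 1)) • (1 + (x ^ β) ^ (1 / β))⁻¹ =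
      β * (x ^ (β - 1) / (1 + x) ^ (β + (1 - β))) := fun x (hx : 0 < x) ↦ by
    rw [← rpow_mul hx.le, mul_one_div_cancel hβ0.ne', add_sub_cancel, rpow_one, rpow_one,
      abs_of_pos hβ0, smul_eq_mul]
    ring
  rw [← integral_comp_rpow_Ioi _ hβ0.ne', setIntegral_congr_fun measurableSet_Ioi hcongr,
    integral_const_mul, integral_Ioi_rpow_div_one_add_rpow hβ0 (sub_pos.2 hβ1), beta,
    add_sub_cancel, Gamma_one, div_one, Gamma_mul_Gamma_one_sub]
  ring

lemma integrableOn_inv_one_add_rpow_one_div {β : ℝ} (hβ0 : 0 < β) (hβ1 : β < 1) :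
    IntegrableOn (fun s : ℝ ↦ (1 + s ^ (1 / β))⁻¹) (Ioi 0) := by
  have hsin : 0 < sin (π * β) :=
    sin_pos_of_pos_of_lt_pi (by positivity) (mul_lt_of_lt_one_right pi_pos hβ1)
  -- a non-integrable function would have Bochner integral `0`
  refine Integrable.of_integral_ne_zero ?_
  rw [integral_Ioi_inv_one_add_rpow_one_div hβ0 hβ1]
  positivity

lemma lintegral_ofReal_g_rpow_eq_ofReal_integral {β : ℝ} (hβ0 : 0 < β) (hβ1 : β < 1) :
    ∫⁻ z, ENNReal.ofReal (g z ^ β) ∂gaussianReal 0 1 =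
      ENNReal.ofReal (∫ s in Ioi 0, (1 + s ^ (1 / β))⁻¹) := by
  rw [lintegral_ofReal_g_rpow hβ0, ofReal_integral_eq_lintegral_ofReal
    (integrableOn_inv_one_add_rpow_one_div hβ0 hβ1)]
  exact ae_restrict_of_forall_mem measurableSet_Ioi fun s (hs : 0 < s) ↦ by positivity

lemma stronglyMeasurable_g_rpow {β : ℝ} (hβ : 0 ≤ β) : StronglyMeasurable fun z ↦ g z ^ β :=
  (continuous_g.rpow_const fun _ ↦ Or.inr hβ).stronglyMeasurable

lemma integrable_g_rpow {β : ℝ} (hβ0 : 0 < β) (hβ1 : β < 1) :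
    Integrable (fun z ↦ g z ^ β) (gaussianReal 0 1) := by
  refine ⟨(stronglyMeasurable_g_rpow hβ0.le).aestronglyMeasurable, ?_⟩
  rw [hasFiniteIntegral_iff_ofReal (ae_of_all _ fun z ↦ rpow_nonneg (g_pos z).le β),
    lintegral_ofReal_g_rpow_eq_ofReal_integral hβ0 hβ1]
  exact ENNReal.ofReal_lt_top

lemma integral_g_rpow {β : ℝ} (hβ0 : 0 < β) (hβ1 : β < 1) :
    ∫ z, g z ^ β ∂gaussianReal 0 1 = ∫ s in Ioi 0, (1 + s ^ (1 / β))⁻¹ := by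
  rw [integral_eq_lintegral_of_nonneg_ae (ae_of_all _ fun z ↦ rpow_nonneg (g_pos z).le β)
    (stronglyMeasurable_g_rpow hβ0.le).aestronglyMeasurable,
    lintegral_ofReal_g_rpow_eq_ofReal_integral hβ0 hβ1, ENNReal.toReal_ofReal]
  exact setIntegral_nonneg measurableSet_Ioi fun s (hs : 0 < s) ↦ by positivity

theorem moment_of_g_std_normal_general
    {Ω : Type*} [MeasurableSpace Ω] (P : Measure Ω)
    (Z : Ω → ℝ) (hZm : Measurable Z)
    (hZ : Measure.map Z P = gaussianReal 0 1)
    (β : ℝ) (hβ0 : 0 < β) (hβ1 : β < 1) :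
    Integrable (fun ω => g (Z ω) ^ β) P ∧
    (∫ ω, g (Z ω) ^ β ∂P) = (∫ s in Set.Ioi (0:ℝ), (1 + s ^ (1 / β))⁻¹) ∧
    (∫ ω, g (Z ω) ^ β ∂P) = Real.pi * β / Real.sin (Real.pi * β) := by
  have hmeas : AEStronglyMeasurable (fun z ↦ g z ^ β) (P.map Z) :=
    (stronglyMeasurable_g_rpow hβ0.le).aestronglyMeasurable
  have hint : Integrable (fun z ↦ g z ^ β) (P.map Z) := hZ ▸ integrable_g_rpow hβ0 hβ1
  have hval : ∫ ω, g (Z ω) ^ β ∂P = ∫ s in Ioi 0, (1 + s ^ (1 / β))⁻¹ := by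
    rw [← integral_map hZm.aemeasurable hmeas, hZ, integral_g_rpow hβ0 hβ1]
  exact ⟨(integrable_map_measure hmeas hZm.aemeasurable).1 hint, hval,
    hval.trans (integral_Ioi_inv_one_add_rpow_one_div hβ0 hβ1)⟩

/-- If `Z` is standard normal and `β ∈ (0,1)`, then
`E[g(Z)^β] = ∫₀^∞ ds/(1 + s^{1/β}) = πβ/sin(πβ)`; in particular `g(Z)^β` is
integrable. -/
theorem moment_of_g_std_normal
    {Ω : Type*} [MeasurableSpace Ω] (P : Measure Ω) [IsProbabilityMeasure P]
    (Z : Ω → ℝ) (hZm : Measurable Z)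
    (hZ : Measure.map Z P = gaussianReal 0 1)
    (β : ℝ) (hβ0 : 0 < β) (hβ1 : β < 1) :
    Integrable (fun ω => g (Z ω) ^ β) P ∧
    (∫ ω, g (Z ω) ^ β ∂P) = (∫ s in Set.Ioi (0:ℝ), (1 + s ^ (1 / β))⁻¹) ∧
    (∫ ω, g (Z ω) ^ β ∂P) = Real.pi * β / Real.sin (Real.pi * β) :=
  moment_of_g_std_normal_general P Z hZm hZ β hβ0 hβ1
end
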